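/- Let K, γ, m be positive integers and for 0 ≤ X ≤ γ let N(X) be the number of elements of the multiset {1,…,X} ∪ {K, K+1, …, K+γ−X−1} divisible by m. If β is chosen with 0 ≤ β ≤ γ such that β ≡ γ + K (mod m), then N(β) ≤ N(X) for all 0 ≤ X ≤ γ. -/

import Mathlib

/-!
Write `S = K - 1 + γ`. The multiples of `m` in `{1,…,X}` and in `{K,…,K+γ-X-1} = (K - 1, S - X]`
number `X / m` and `(S - X) / m - (K - 1) / m`, so only the floor sum `X / m + (S - X) / m`
depends on `X`. Over all splittings `x + y = S` this sum is at least `(S + 1) / m - 1`, with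
equality as soon as `m ∣ y + 1`, i.e. `x ≡ S + 1 = γ + K (mod m)`.
-/

open Finset

namespace Nat

theorem add_add_one_div_le (x y m : ℕ) : (x + y + 1) / m ≤ x / m + y / m + 1 := by
  rcases m.eq_zero_or_pos with rfl | hm
  · simp
  rw [← Nat.lt_succ_iff, Nat.div_lt_iff_lt_mul hm]
  have hx := Nat.lt_mul_div_succ x hm
  have hy := Nat.lt_mul_div_succ y hm
  nlinarith

theorem div_add_div_add_one_of_dvd {x y m : ℕ} (hy : m ∣ y + 1) :
    x / m + y / m + 1 = (x + y + 1) / m := by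
  rw [add_assoc x, Nat.add_div_of_dvd_left hy, Nat.succ_div_of_dvd hy, add_assoc]

theorem div_add_div_le_of_dvd_add_one {x y x' y' m : ℕ} (hy : m ∣ y + 1)
    (h : x + y = x' + y') : x / m + y / m ≤ x' / m + y' / m := by
  have := add_add_one_div_le x' y' m
  rw [← h, ← div_add_div_add_one_of_dvd hy] at this
  omega

theorem card_Ioc_filter_dvd (m : ℕ) {a b : ℕ} (h : a ≤ b) :
    #{x ∈ Ioc a b | m ∣ x} = b / m - a / m := by
  have hsplit := congrArg (fun s => #{x ∈ s | m ∣ x})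
    (Ioc_union_Ioc_eq_Ioc (Nat.zero_le a) h)
  simp only [filter_union, card_union_of_disjoint
    (disjoint_filter_filter (Ioc_disjoint_Ioc_of_le le_rfl)), Ioc_filter_dvd_card_eq_div] at hsplit
  omega

end Nat

theorem card_filter_dvd_Icc_add_Icc (m : ℕ) {K γ X : ℕ} (hK : 0 < K) (hX : X ≤ γ) :
    (((Icc 1 X).val + (Icc K (K + γ - X - 1)).val).filter (m ∣ ·)).card =
      X / m + (K - 1 + (γ - X)) / m - (K - 1) / m := by
  have hlow : Icc 1 X = Ioc 0 X := by
    rw [← Icc_add_one_left_eq_Ioc, zero_add]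
  have hhigh : Icc K (K + γ - X - 1) = Ioc (K - 1) (K - 1 + (γ - X)) := by
    ext x
    simp only [mem_Icc, mem_Ioc]
    omega
  rw [Multiset.filter_add, Multiset.card_add, hlow, hhigh]
  change #{x ∈ Ioc 0 X | m ∣ x} + #{x ∈ Ioc (K - 1) (K - 1 + (γ - X)) | m ∣ x} = _
  rw [Nat.card_Ioc_filter_dvd m (Nat.zero_le X),
    Nat.card_Ioc_filter_dvd m (Nat.le_add_right _ _), Nat.zero_div, Nat.sub_zero,
    Nat.add_sub_assoc (Nat.div_le_div_right (Nat.le_add_right _ _))]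

theorem cm_gamma_min_general (K γ m β : ℕ) (hK : 0 < K)
    (hβ : β ≤ γ) (hmod : (β : ℤ) ≡ (γ : ℤ) + K [ZMOD (m : ℤ)])
    (X : ℕ) (hX : X ≤ γ) :
    (((Finset.Icc 1 β).val + (Finset.Icc K (K + γ - β - 1)).val).filter
        (fun x => m ∣ x)).card ≤
      (((Finset.Icc 1 X).val + (Finset.Icc K (K + γ - X - 1)).val).filter
        (fun x => m ∣ x)).card := by
  rw [card_filter_dvd_Icc_add_Icc m hK hβ, card_filter_dvd_Icc_add_Icc m hK hX]
  have hcast : ((K - 1 + (γ - β) + 1 : ℕ) : ℤ) = γ + K - β := by omega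
  have hdvd : m ∣ K - 1 + (γ - β) + 1 := Int.natCast_dvd_natCast.mp (hcast ▸ hmod.dvd)
  exact Nat.sub_le_sub_right (Nat.div_add_div_le_of_dvd_add_one hdvd (by omega)) _

/-- the count of multiples of `m` in `{1,…,X} ∪ {K,…,K+γ−X−1}` is
minimized when `X ≡ γ + K (mod m)`. -/
theorem cm_gamma_min (K γ m β : ℕ) (hK : 0 < K) (hγ : 0 < γ) (hm : 0 < m)
    (hβ : β ≤ γ) (hmod : (β : ℤ) ≡ (γ : ℤ) + K [ZMOD (m : ℤ)])
    (X : ℕ) (hX : X ≤ γ) :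
    (((Finset.Icc 1 β).val + (Finset.Icc K (K + γ - β - 1)).val).filter
        (fun x => m ∣ x)).card ≤
      (((Finset.Icc 1 X).val + (Finset.Icc K (K + γ - X - 1)).val).filter
        (fun x => m ∣ x)).card :=
  cm_gamma_min_general K γ m β hK hβ hmod X hX
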